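/- arXiv:1902.07689 — 3 statements merged into one kernel-verified Lean document; each statement's English description precedes it below -/
import Mathlib

section
/- Let 𝓛 be a nest on a complex separable Hilbert space H and let S be a subset of H not containing 0. If M_x ≠ M_y for all distinct x, y ∈ S, then S is a linearly independent set. -/
open scoped InnerProductSpace

variable {H : Type*} [NormedAddCommGroup H] [InnerProductSpace ℂ H]
  [CompleteSpace H] [TopologicalSpace.SeparableSpace H]

/-- A subspace lattice on `H`: a set of closed subspaces containing `⊥` and `⊤`,
closed under arbitrary intersections and closed linear spans. -/
def IsSubspaceLattice (𝓛 : Set (Submodule ℂ H)) : Prop :=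
  (∀ M ∈ 𝓛, IsClosed (M : Set H)) ∧ ⊥ ∈ 𝓛 ∧ ⊤ ∈ 𝓛 ∧
  (∀ S ⊆ 𝓛, sInf S ∈ 𝓛) ∧ (∀ S ⊆ 𝓛, (sSup S).topologicalClosure ∈ 𝓛)

/-- A nest: a totally ordered subspace lattice. -/
def IsNest (𝓛 : Set (Submodule ℂ H)) : Prop :=
  IsSubspaceLattice 𝓛 ∧ ∀ M ∈ 𝓛, ∀ N ∈ 𝓛, M ≤ N ∨ N ≤ M

/-- A continuous nest. -/
def IsContinuousNest (𝓛 : Set (Submodule ℂ H)) : Prop :=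
  IsNest 𝓛 ∧ ∀ M ∈ 𝓛, M = (sSup {N ∈ 𝓛 | N < M}).topologicalClosure

/-- `M_x`: the intersection of all members of `𝓛` containing `x`. -/
noncomputable def Mx (𝓛 : Set (Submodule ℂ H)) (x : H) : Submodule ℂ H :=
  sInf {M ∈ 𝓛 | x ∈ M}

/-- `M̂_x`: the closed span of all members of `𝓛` orthogonal to `x`. -/
noncomputable def Mhat (𝓛 : Set (Submodule ℂ H)) (x : H) : Submodule ℂ H :=
  (sSup {M ∈ 𝓛 | ∀ v ∈ M, inner ℂ x v = (0 : ℂ)}).topologicalClosure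

/-- `φ_T(M)`: the closed span of all members `M'` of `𝓛` with `T(M') ⊆ M`. -/
noncomputable def phiT (𝓛 : Set (Submodule ℂ H)) (T : H →L[ℂ] H) (M : Submodule ℂ H) :
    Submodule ℂ H :=
  (sSup {M' ∈ 𝓛 | ∀ v ∈ M', T v ∈ M}).topologicalClosure

/-- `Ψ_T(M)`: the intersection of all `M' ∈ 𝓛` with `φ_T(M') = φ_T(M)`. -/
noncomputable def PsiT (𝓛 : Set (Submodule ℂ H)) (T : H →L[ℂ] H) (M : Submodule ℂ H) :
    Submodule ℂ H :=
  sInf {M' ∈ 𝓛 | phiT 𝓛 T M' = phiT 𝓛 T M}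

/-- `σ_T(M)`: the closed span of all `M' ∈ 𝓛` with `φ_T(M') = φ_T(M)`. -/
noncomputable def sigmaT (𝓛 : Set (Submodule ℂ H)) (T : H →L[ℂ] H) (M : Submodule ℂ H) :
    Submodule ℂ H :=
  (sSup {M' ∈ 𝓛 | phiT 𝓛 T M' = phiT 𝓛 T M}).topologicalClosure

/-- The kernel map `ω_T`. -/
noncomputable def omegaT (𝓛 : Set (Submodule ℂ H)) (T : H →L[ℂ] H) (M : Submodule ℂ H) :
    Submodule ℂ H × Submodule ℂ H :=
  (phiT 𝓛 T M, PsiT 𝓛 T M)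

/-- The rank-one operator `x ⊗ y : z ↦ ⟨z, y⟩ x`. -/
noncomputable def rankOne (x y : H) : H →L[ℂ] H :=
  (innerSL ℂ y).smulRight x

/-- The nest algebra of a subspace lattice. -/
def nestAlg (𝓛 : Set (Submodule ℂ H)) : Set (H →L[ℂ] H) :=
  {T | ∀ M ∈ 𝓛, ∀ v ∈ M, T v ∈ M}

/-- Lie module over the nest algebra. -/
def IsLieModule (𝓛 : Set (Submodule ℂ H)) (𝓜 : Submodule ℂ (H →L[ℂ] H)) : Prop :=
  ∀ A ∈ 𝓜, ∀ T ∈ nestAlg 𝓛, A.comp T - T.comp A ∈ 𝓜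

/-- Orthogonal projection of a vector onto a closed subspace (junk value `0` if not closed). -/
noncomputable def projVec (N : Submodule ℂ H) (z : H) : H := by
  classical
  exact if h : IsClosed (N : Set H) then
    have : CompleteSpace N := h.completeSpace_coe
    (N.orthogonalProjectionOnto z : H)
  else 0

theorem linearIndependent_of_notMem_iSup_lt {ι K V : Type*} [DivisionRing K] [AddCommGroup V]
    [Module K V] {v : ι → V} {N : ι → Submodule K V} (hchain : ∀ i j, N i ≤ N j ∨ N j ≤ N i)
    (hN : Function.Injective N) (hv : ∀ i, v i ∈ N i)
    (hnot : ∀ i, v i ∉ ⨆ (j) (_ : N j < N i), N j) :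
    LinearIndependent K v := by
  classical
  rw [linearIndependent_iff']
  intro t g hsum i hi
  by_contra hgi
  -- The summand whose subspace is largest cannot be cancelled by the others, which lie strictly below.
  obtain ⟨m, hm, hmax⟩ := {j ∈ t | g j ≠ 0}.exists_maximalFor N ⟨i, by simp [hi, hgi]⟩
  obtain ⟨hmt, hgm⟩ := Finset.mem_filter.1 hm
  have hlt : ∀ j ∈ t.erase m, g j ≠ 0 → N j < N m := fun j hj hgj =>
    lt_of_le_of_ne ((hchain j m).elim id (hmax (by simp [Finset.mem_of_mem_erase hj, hgj])))
      (hN.ne (Finset.ne_of_mem_erase hj))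
  have hrest : ∑ j ∈ t.erase m, g j • v j ∈ ⨆ (j) (_ : N j < N m), N j := by
    refine Submodule.sum_mem _ fun j hj => ?_
    by_cases hgj : g j = 0
    · simp [hgj]
    · exact Submodule.smul_mem _ _
        (Submodule.mem_iSup_of_mem j (Submodule.mem_iSup_of_mem (hlt j hj hgj) (hv j)))
  have hgmv : g m • v m = -∑ j ∈ t.erase m, g j • v j :=
    eq_neg_of_add_eq_zero_left ((Finset.add_sum_erase t (fun j => g j • v j) hmt).trans hsum)
  exact hnot m ((Submodule.smul_mem_iff _ hgm).1 (hgmv ▸ neg_mem hrest))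

section Mx

variable {E : Type*} [NormedAddCommGroup E] [InnerProductSpace ℂ E] {𝓛 : Set (Submodule ℂ E)}

theorem mem_Mx (x : E) : x ∈ Mx 𝓛 x :=
  Submodule.mem_sInf.2 fun _ hM => hM.2

theorem Mx_le {x : E} {M : Submodule ℂ E} (hM : M ∈ 𝓛) (hx : x ∈ M) : Mx 𝓛 x ≤ M :=
  sInf_le ⟨hM, hx⟩

theorem IsSubspaceLattice.Mx_mem (h𝓛 : IsSubspaceLattice 𝓛) (x : E) : Mx 𝓛 x ∈ 𝓛 :=
  h𝓛.2.2.2.1 _ fun _ hM => hM.1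

-- The algebraic span of a chain is its union, so `x` would lie in a member below `M_x`.
theorem notMem_sSup_lt_Mx (h𝓛 : IsChain (· ≤ ·) 𝓛) {x : E} (hx : x ≠ 0) :
    x ∉ sSup {M ∈ 𝓛 | M < Mx 𝓛 x} := by
  rcases Set.eq_empty_or_nonempty {M ∈ 𝓛 | M < Mx 𝓛 x} with hempty | hne
  · simpa [hempty] using hx
  · rw [Submodule.mem_sSup_of_directed hne (h𝓛.mono fun _ hM => hM.1).directedOn]
    rintro ⟨M, ⟨hM, hlt⟩, hxM⟩
    exact (Mx_le hM hxM).not_gt hlt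

end Mx

theorem stmt_1 (𝓛 : Set (Submodule ℂ H)) (h𝓛 : IsNest 𝓛) (S : Set H)
    (h0 : (0 : H) ∉ S)
    (hS : ∀ x ∈ S, ∀ y ∈ S, x ≠ y → Mx 𝓛 x ≠ Mx 𝓛 y) :
    LinearIndependent ℂ (fun s : S => (s : H)) := by
  have hmem := h𝓛.1.Mx_mem
  have hchain : IsChain (· ≤ ·) 𝓛 := fun M hM N hN _ => h𝓛.2 M hM N hN
  refine linearIndependent_of_notMem_iSup_lt (N := fun s : S => Mx 𝓛 s)
    (fun i j => h𝓛.2 _ (hmem i) _ (hmem j))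
    (fun i j hij => Subtype.ext (by_contra fun hne => hS i i.2 j j.2 hne hij))
    (fun s => mem_Mx (s : H)) fun s hs => ?_
  have hle : ⨆ (j : S) (_ : Mx 𝓛 j < Mx 𝓛 s), Mx 𝓛 j ≤ sSup {M ∈ 𝓛 | M < Mx 𝓛 s} :=
    iSup₂_le fun j hj => le_sSup ⟨hmem j, hj⟩
  exact notMem_sSup_lt_Mx hchain (ne_of_mem_of_not_mem s.2 h0) (hle hs)
end

section
/- Let 𝓛 be a subspace lattice on a complex separable Hilbert space H, let T be a bounded operator on H and let M ∈ 𝓛. Then Ψ_T(M) equals the intersection of {N ∈ 𝓛 : T(φ_T(M)) ⊆ N}. (In projection terms: ψ_T(P) = ⋁{Q^⊥ ∈ 𝓛^⊥ : Q^⊥ T φ_T(P) = 0}.) -/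
open scoped InnerProductSpace

variable {H : Type*} [NormedAddCommGroup H] [InnerProductSpace ℂ H]
  [CompleteSpace H] [TopologicalSpace.SeparableSpace H]

/-!
Write `N₀` for the intersection of the members of `𝓛` containing `T(φ_T(M))`. Every `M'` with
`φ_T(M') = φ_T(M)` contains `T(φ_T(M'))`, so `N₀ ≤ Ψ_T(M)`. Conversely `φ_T(N₀) = φ_T(M)`:
`N₀ ≤ M` gives one inclusion, and each generator `M'` of `φ_T(M)` satisfies
`T(M') ⊆ T(φ_T(M)) ⊆ N₀`, giving the other. Hence `N₀` is one of the subspaces intersected in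
`Ψ_T(M)`.
-/

section PhiT

variable {𝓛 : Set (Submodule ℂ H)} {T : H →L[ℂ] H}

lemma le_phiT {M' N : Submodule ℂ H} (hM' : M' ∈ 𝓛) (hT : ∀ v ∈ M', T v ∈ N) :
    M' ≤ phiT 𝓛 T N :=
  (le_sSup (show M' ∈ {K ∈ 𝓛 | ∀ v ∈ K, T v ∈ N} from ⟨hM', hT⟩)).trans
    (Submodule.le_topologicalClosure _)

lemma phiT_mapsTo {N : Submodule ℂ H} (hN : IsClosed (N : Set H)) :
    ∀ v ∈ phiT 𝓛 T N, T v ∈ N := by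
  have hgen : sSup {M' ∈ 𝓛 | ∀ v ∈ M', T v ∈ N} ≤ N.comap (T : H →ₗ[ℂ] H) :=
    sSup_le fun _ hM' => hM'.2
  exact fun v hv => Submodule.topologicalClosure_minimal _ hgen (hN.preimage T.continuous) hv

lemma phiT_mono {M N : Submodule ℂ H} (h : M ≤ N) : phiT 𝓛 T M ≤ phiT 𝓛 T N :=
  Submodule.topologicalClosure_mono
    (sSup_le_sSup fun _ hM' => ⟨hM'.1, fun v hv => h (hM'.2 v hv)⟩)

lemma phiT_le_phiT_of_mapsTo {M N : Submodule ℂ H} (h : ∀ v ∈ phiT 𝓛 T M, T v ∈ N) :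
    phiT 𝓛 T M ≤ phiT 𝓛 T N :=
  Submodule.topologicalClosure_mono
    (sSup_le_sSup fun _ hM' => ⟨hM'.1, fun v hv => h v (le_phiT hM'.1 hM'.2 hv)⟩)

lemma phiT_sInf_mapsTo_phiT {M : Submodule ℂ H} (hM : M ∈ 𝓛) (hMc : IsClosed (M : Set H)) :
    phiT 𝓛 T (sInf {N ∈ 𝓛 | ∀ v ∈ phiT 𝓛 T M, T v ∈ N}) = phiT 𝓛 T M := by
  refine le_antisymm (phiT_mono (sInf_le ⟨hM, phiT_mapsTo hMc⟩)) (phiT_le_phiT_of_mapsTo ?_)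
  exact fun v hv => Submodule.mem_sInf.2 fun N hN => hN.2 v hv

end PhiT

theorem stmt_3 (𝓛 : Set (Submodule ℂ H)) (h𝓛 : IsSubspaceLattice 𝓛)
    (T : H →L[ℂ] H) (M : Submodule ℂ H) (hM : M ∈ 𝓛) :
    PsiT 𝓛 T M = sInf {N ∈ 𝓛 | ∀ v ∈ phiT 𝓛 T M, T v ∈ N} := by
  obtain ⟨hclosed, -, -, hsInf, -⟩ := h𝓛
  refine le_antisymm ?_ (le_sInf ?_)
  · exact sInf_le ⟨hsInf _ fun N hN => hN.1, phiT_sInf_mapsTo_phiT hM (hclosed M hM)⟩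
  · rintro N ⟨hN, hφ⟩
    exact sInf_le ⟨hN, hφ ▸ phiT_mapsTo (hclosed N hN)⟩
end

section
/- Let 𝓛 be a nest on a complex separable Hilbert space H and let T be a bounded operator on H. Then for every M ∈ 𝓛 there exists x ∈ H such that φ_T(M) = M_x and Ψ_T(M) = M_{Tx}. (In projection terms: ω_T(P) = (P_x, P_{Tx}^⊥).) -/
open scoped InnerProductSpace

variable {H : Type*} [NormedAddCommGroup H] [InnerProductSpace ℂ H]
  [CompleteSpace H] [TopologicalSpace.SeparableSpace H]

/-! A nest is a chain, so in a separable space each of the families `{N ∈ 𝓛 | N < φ_T(M)}` and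
`{N ∈ 𝓛 | N < Ψ_T(M)}` has a countable cofinal subfamily. Inside the Banach space `φ_T(M)` the
vectors lying in some `N < φ_T(M)`, or mapped by `T` into some `N < Ψ_T(M)`, therefore form a
countable union of closed subspaces, each proper by the minimality of `Ψ_T(M)`; by Baire's theorem
some `x ∈ φ_T(M)` avoids them all, and in a chain this forces `M_x = φ_T(M)` and
`M_{Tx} = Ψ_T(M)`. -/

open Set

theorem IsChain.exists_countable_cofinal_of_isClosed {X S : Type*} [TopologicalSpace X]
    [SecondCountableTopology X] [SetLike S X] [PartialOrder S] [IsConcreteLE S X] {C : Set S}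
    (hC : IsChain (· ≤ ·) C)
    (hcl : ∀ s ∈ C, IsClosed (s : Set X)) :
    ∃ t ⊆ C, t.Countable ∧ ∀ s ∈ C, ∃ u ∈ t, s ≤ u := by
  set U : Set X := ⋃ s ∈ C, (s : Set X)
  obtain ⟨d, hd, hdense⟩ := TopologicalSpace.exists_countable_dense U
  have hcover : ∀ y : U, ∃ s ∈ C, (y : X) ∈ s := fun y => by
    obtain ⟨s, hs, hy⟩ := mem_iUnion₂.1 y.2
    exact ⟨s, hs, hy⟩
  choose g hgC hyg using hcover
  have htop : {s ∈ C | ∀ s' ∈ C, s' ≤ s}.Subsingleton :=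
    fun a ha b hb => le_antisymm (hb.2 a ha.1) (ha.2 b hb.1)
  refine ⟨g '' d ∪ {s ∈ C | ∀ s' ∈ C, s' ≤ s},
    union_subset (image_subset_iff.2 fun y _ => hgC y) (sep_subset _ _),
    (hd.image g).union htop.countable, fun s hs => ?_⟩
  by_cases hbelow : ∃ y ∈ d, s ≤ g y
  · obtain ⟨y, hy, hsy⟩ := hbelow
    exact ⟨g y, Or.inl (mem_image_of_mem g hy), hsy⟩
  push Not at hbelow
  have hds : ∀ y ∈ d, (y : X) ∈ s := fun y hy =>
    SetLike.coe_subset_coe.2 ((hC.total hs (hgC y)).resolve_left (hbelow y hy)) (hyg y)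
  have hUs : U ⊆ s := fun u hu => (hcl s hs).closure_subset
    (map_mem_closure continuous_subtype_val (hdense ⟨u, hu⟩) hds)
  exact ⟨s, Or.inr ⟨hs, fun s' hs' => SetLike.coe_subset_coe.1
    fun v hv => hUs (mem_biUnion hs' hv)⟩, le_rfl⟩

namespace Submodule

theorem exists_forall_notMem_of_countable {𝕜 E : Type*} [NontriviallyNormedField 𝕜]
    [AddCommGroup E] [TopologicalSpace E] [BaireSpace E] [ContinuousAdd E] [Module 𝕜 E]
    [ContinuousSMul 𝕜 E] {S : Set (Submodule 𝕜 E)} (hS : S.Countable)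
    (hcl : ∀ p ∈ S, IsClosed (p : Set E)) (hne : ∀ p ∈ S, p ≠ ⊤) :
    ∃ x, ∀ p ∈ S, x ∉ p := by
  by_contra! hcover
  have hU : ⋃ p ∈ S, (p : Set E) = univ :=
    eq_univ_of_forall fun x => by
      obtain ⟨p, hp, hxp⟩ := hcover x
      exact mem_iUnion₂.2 ⟨p, hp, hxp⟩
  obtain ⟨p, hp, hint⟩ := nonempty_biUnion.1 (dense_biUnion_interior_of_closed hcl hS hU).nonempty
  exact hne p hp (p.eq_top_of_nonempty_interior' hint)

theorem exists_mem_forall_notMem_of_countable {𝕜 E : Type*} [NontriviallyNormedField 𝕜]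
    [NormedAddCommGroup E] [NormedSpace 𝕜 E] [CompleteSpace E] {V : Submodule 𝕜 E}
    (hV : IsClosed (V : Set E)) {S : Set (Submodule 𝕜 E)} (hS : S.Countable)
    (hcl : ∀ p ∈ S, IsClosed (p : Set E)) (hne : ∀ p ∈ S, ¬V ≤ p) :
    ∃ x ∈ V, ∀ p ∈ S, x ∉ p := by
  have : CompleteSpace V := hV.completeSpace_coe
  obtain ⟨x, hx⟩ := exists_forall_notMem_of_countable (S := comap V.subtype '' S) (hS.image _)
    (forall_mem_image.2 fun p hp => (hcl p hp).preimage continuous_subtype_val)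
    (forall_mem_image.2 fun p hp => by rw [Ne, comap_subtype_eq_top]; exact hne p hp)
  exact ⟨x, x.2, fun p hp => hx _ (mem_image_of_mem _ hp)⟩

end Submodule

section KernelMap

variable {E : Type*} [NormedAddCommGroup E] [InnerProductSpace ℂ E]
  {𝓛 : Set (Submodule ℂ E)} {T : E →L[ℂ] E} {M N : Submodule ℂ E}

theorem IsNest.isChain (h𝓛 : IsNest 𝓛) : IsChain (· ≤ ·) 𝓛 :=
  fun M hM N hN _ => h𝓛.2 M hM N hN

theorem IsSubspaceLattice.phiT_mem (h𝓛 : IsSubspaceLattice 𝓛) (T : E →L[ℂ] E)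
    (M : Submodule ℂ E) : phiT 𝓛 T M ∈ 𝓛 :=
  h𝓛.2.2.2.2 _ (sep_subset _ _)

theorem IsSubspaceLattice.PsiT_mem (h𝓛 : IsSubspaceLattice 𝓛) (T : E →L[ℂ] E)
    (M : Submodule ℂ E) : PsiT 𝓛 T M ∈ 𝓛 :=
  h𝓛.2.2.2.1 _ (sep_subset _ _)

theorem phiT_mono_s8 : Monotone (phiT 𝓛 T) := fun _ _ hM =>
  Submodule.topologicalClosure_mono (sSup_le_sSup fun _ hN => ⟨hN.1, fun v hv => hM (hN.2 v hv)⟩)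

theorem le_phiT_s8 (hN : N ∈ 𝓛) (hTN : N ≤ M.comap T.toLinearMap) : N ≤ phiT 𝓛 T M :=
  (le_sSup (show N ∈ {M' ∈ 𝓛 | ∀ v ∈ M', T v ∈ M} from ⟨hN, fun _ hv => hTN hv⟩)).trans
    (Submodule.le_topologicalClosure _)

theorem phiT_le_comap (hM : IsClosed (M : Set E)) : phiT 𝓛 T M ≤ M.comap T.toLinearMap :=
  Submodule.topologicalClosure_minimal _ (sSup_le fun _ hN => hN.2) (hM.preimage T.continuous)

theorem PsiT_le (hM : M ∈ 𝓛) : PsiT 𝓛 T M ≤ M :=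
  sInf_le ⟨hM, rfl⟩

theorem phiT_le_comap_PsiT (hcl : ∀ N ∈ 𝓛, IsClosed (N : Set E)) :
    phiT 𝓛 T M ≤ (PsiT 𝓛 T M).comap T.toLinearMap := fun _ hv =>
  Submodule.mem_sInf.2 fun N ⟨hN, hφ⟩ => phiT_le_comap (hcl N hN) (hφ ▸ hv)

theorem PsiT_le_of_phiT_le_comap (h𝓛 : IsSubspaceLattice 𝓛) (hN : N ∈ 𝓛) (hNM : N ≤ M)
    (hTN : phiT 𝓛 T M ≤ N.comap T.toLinearMap) : PsiT 𝓛 T M ≤ N :=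
  sInf_le ⟨hN, le_antisymm (phiT_mono_s8 hNM) (le_phiT_s8 (h𝓛.phiT_mem T M) hTN)⟩

theorem Mx_eq_of_forall_lt_notMem (h𝓛 : IsChain (· ≤ ·) 𝓛) {x : E} (hN : N ∈ 𝓛) (hx : x ∈ N)
    (hmin : ∀ N' ∈ 𝓛, N' < N → x ∉ N') : Mx 𝓛 x = N := by
  refine le_antisymm (sInf_le ⟨hN, hx⟩) (le_sInf fun N' ⟨hN', hxN'⟩ => ?_)
  by_contra hle
  exact hmin N' hN' (lt_of_le_not_ge ((h𝓛.total hN hN').resolve_left hle) hle) hxN'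

theorem IsNest.exists_mem_phiT_forall_lt_notMem [CompleteSpace E]
    [TopologicalSpace.SeparableSpace E] (h𝓛 : IsNest 𝓛) (T : E →L[ℂ] E) (hM : M ∈ 𝓛) :
    ∃ x ∈ phiT 𝓛 T M, (∀ N ∈ 𝓛, N < phiT 𝓛 T M → x ∉ N) ∧
      (∀ N ∈ 𝓛, N < PsiT 𝓛 T M → T x ∉ N) := by
  have hcl := h𝓛.1.1
  have : SecondCountableTopology E := UniformSpace.secondCountable_of_separable E
  obtain ⟨t₁, ht₁, ht₁c, hcof₁⟩ :=
    (h𝓛.isChain.mono (sep_subset 𝓛 (· < phiT 𝓛 T M))).exists_countable_cofinal_of_isClosed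
      fun N hN => hcl N hN.1
  obtain ⟨t₂, ht₂, ht₂c, hcof₂⟩ :=
    (h𝓛.isChain.mono (sep_subset 𝓛 (· < PsiT 𝓛 T M))).exists_countable_cofinal_of_isClosed
      fun N hN => hcl N hN.1
  obtain ⟨x, hxφ, hx⟩ := Submodule.exists_mem_forall_notMem_of_countable
    (hcl _ (h𝓛.1.phiT_mem T M)) (ht₁c.union (ht₂c.image fun B => B.comap T.toLinearMap))
    (by
      rintro p (hp | ⟨B, hB, rfl⟩)
      · exact hcl p (ht₁ hp).1
      · exact (hcl B (ht₂ hB).1).preimage T.continuous)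
    (by
      rintro p (hp | ⟨B, hB, rfl⟩)
      · exact (ht₁ hp).2.not_ge
      · obtain ⟨hB𝓛, hBΨ⟩ := ht₂ hB
        exact fun hTB => hBΨ.not_ge
          (PsiT_le_of_phiT_le_comap h𝓛.1 hB𝓛 (hBΨ.le.trans (PsiT_le hM)) hTB))
  refine ⟨x, hxφ, fun N hN hlt hxN => ?_, fun N hN hlt hTxN => ?_⟩
  · obtain ⟨A, hA, hNA⟩ := hcof₁ N ⟨hN, hlt⟩
    exact hx A (Or.inl hA) (hNA hxN)
  · obtain ⟨B, hB, hNB⟩ := hcof₂ N ⟨hN, hlt⟩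
    exact hx _ (Or.inr (mem_image_of_mem _ hB)) (hNB hTxN)

end KernelMap

theorem stmt_8 (𝓛 : Set (Submodule ℂ H)) (h𝓛 : IsNest 𝓛)
    (T : H →L[ℂ] H) (M : Submodule ℂ H) (hM : M ∈ 𝓛) :
    ∃ x : H, phiT 𝓛 T M = Mx 𝓛 x ∧ PsiT 𝓛 T M = Mx 𝓛 (T x) := by
  obtain ⟨x, hxφ, hφ, hΨ⟩ := h𝓛.exists_mem_phiT_forall_lt_notMem T hM
  exact ⟨x, (Mx_eq_of_forall_lt_notMem h𝓛.isChain (h𝓛.1.phiT_mem T M) hxφ hφ).symm,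
    (Mx_eq_of_forall_lt_notMem h𝓛.isChain (h𝓛.1.PsiT_mem T M)
      (phiT_le_comap_PsiT h𝓛.1.1 hxφ) hΨ).symm⟩
end
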